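/- Let ν be an r-multicomposition of n and suppose w ∈ S_n stabilizes the components of t^ν, i.e. each set {ν̄_{(i)}+1, …, ν̄_{(i+1)}} (1 ≤ i ≤ r) is invariant under w. Then T_w u⁺_ν = u⁺_ν T_w in the Ariki–Koike algebra H. -/

import Mathlib

/-!
Background formalization of the Ariki–Koike algebra `H = H_{r,n}` over a field `F`,
with parameters `q, Q_1, …, Q_r` (here `Q : ℕ → F`, 1-indexed), together with the
combinatorics of multicompositions, multipartitions, tableaux, the elements
`L_k`, `T_w`, `x_λ`, `u⁺_λ`, `m_λ`, `m_{st}`, `C(m;η)`, `𝔡^{(s)}_{d,t}`, `𝔩^{(s')}`, etc.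

Multicompositions in `r` parts are encoded as functions `ℕ → List ℕ`, the component
`λ^{(s)}` (for `1 ≤ s ≤ r`) being the list `lam s` of its row lengths (so
`λ^{(s)}_i = (lam s).getD (i-1) 0` and `ρ_s(λ) = (lam s).length`).

Tableaux: a `λ`-tableau `t` is encoded by the permutation `d(t) ∈ S_n` with
`t = t^λ · d(t)`; on 1-indexed letters a permutation `w` of `Fin n` acts via `permAct`.
-/

open scoped Classical

noncomputable section

namespace AK

/-- The Coxeter length of a permutation of `{0, …, n-1}`: the number of inversions. -/
def permLen {n : ℕ} (w : Equiv.Perm (Fin n)) : ℕ :=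
  (Finset.univ.filter (fun p : Fin n × Fin n => p.1 < p.2 ∧ w p.2 < w p.1)).card

/-- Action of a permutation of `Fin n` on the 1-indexed letters `{1, …, n}`. -/
def permAct {n : ℕ} (w : Equiv.Perm (Fin n)) (a : ℕ) : ℕ :=
  if h : 1 ≤ a ∧ a ≤ n then ((w ⟨a - 1, by omega⟩ : Fin n) : ℕ) + 1 else a

/-- `λ^{(s)}_i`, the length of the `i`-th row (1-indexed) of the `s`-th component. -/
def rowEntry (lam : ℕ → List ℕ) (s i : ℕ) : ℕ := (lam s).getD (i - 1) 0

/-- `λ̄_{(i,s)} = Σ_{j=1}^{s-1} |λ^{(j)}| + Σ_{i'=1}^{i} λ^{(s)}_{i'}`;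
in particular `bar lam s 0 = λ̄_{(s)}`. -/
def bar (lam : ℕ → List ℕ) (s i : ℕ) : ℕ :=
  (∑ j ∈ Finset.range (s - 1), (lam (j + 1)).sum) + ((lam s).take i).sum

/-- `lam` is an `r`-multicomposition of `n` (canonically represented: trivial
outside components `1, …, r`). -/
def IsMulticomp (r n : ℕ) (lam : ℕ → List ℕ) : Prop :=
  (∑ s ∈ Finset.Icc 1 r, (lam s).sum) = n ∧ ∀ s, s = 0 ∨ r < s → lam s = []

/-- every component is a partition (weakly decreasing, with positive rows). -/
def IsMultipartition (lam : ℕ → List ℕ) : Prop :=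
  ∀ s, (lam s).Pairwise (· ≥ ·) ∧ ∀ x ∈ lam s, 0 < x

/-- The dominance order `λ ⊴ μ`. -/
def Dominates (lam mu : ℕ → List ℕ) : Prop := ∀ l s, bar lam l s ≤ bar mu l s

/-- Strict dominance `λ ◁ μ`. -/
def DomStrict (lam mu : ℕ → List ℕ) : Prop := Dominates lam mu ∧ lam ≠ mu

/-- The diagram `[λ]` as a finset of nodes `(i, j, k)` (row, column, component),
all 1-indexed. -/
def diagF (r n : ℕ) (lam : ℕ → List ℕ) : Finset (ℕ × ℕ × ℕ) :=
  ((Finset.Icc 1 n) ×ˢ (Finset.Icc 1 n) ×ˢ (Finset.Icc 1 r)).filter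
    (fun x => x.2.1 ≤ rowEntry lam x.2.2 x.1)

/-- The entry of the row-reading tableau `t^λ` at the node `x = (i,j,k)`. -/
def tEntry (lam : ℕ → List ℕ) (x : ℕ × ℕ × ℕ) : ℕ := bar lam x.2.2 (x.1 - 1) + x.2.1

/-- The (1-indexed) entry `a` lies in row `i` of component `s` of `t^λ`. -/
def InRow (lam : ℕ → List ℕ) (s i a : ℕ) : Prop := bar lam s (i - 1) < a ∧ a ≤ bar lam s i

/-- The (row, component) pair of the row of `t^λ` containing the entry `a`. -/
def rowcompOf (r : ℕ) (lam : ℕ → List ℕ) (a : ℕ) : ℕ × ℕ :=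
  if h : ∃ p : ℕ × ℕ, 1 ≤ p.1 ∧ 1 ≤ p.2 ∧ p.2 ≤ r ∧ InRow lam p.2 p.1 a then h.choose
  else (0, 0)

/-- `w` stabilizes the rows of `t^λ`. -/
def RowStab (r n : ℕ) (lam : ℕ → List ℕ) (w : Equiv.Perm (Fin n)) : Prop :=
  ∀ a : Fin n, ∀ s i, 1 ≤ s → s ≤ r → 1 ≤ i →
    InRow lam s i ((a : ℕ) + 1) → InRow lam s i (permAct w ((a : ℕ) + 1))

/-- The `λ`-tableau `t^λ · w` is standard (entries increase along rows and down
columns of every component). -/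
def IsStd (r n : ℕ) (lam : ℕ → List ℕ) (w : Equiv.Perm (Fin n)) : Prop :=
  (∀ x ∈ diagF r n lam, (x.1, x.2.1 + 1, x.2.2) ∈ diagF r n lam →
      permAct w (tEntry lam x) < permAct w (tEntry lam (x.1, x.2.1 + 1, x.2.2))) ∧
  (∀ x ∈ diagF r n lam, (x.1 + 1, x.2.1, x.2.2) ∈ diagF r n lam →
      permAct w (tEntry lam x) < permAct w (tEntry lam (x.1 + 1, x.2.1, x.2.2)))

/-- `w` lies in `S_{(m,η)}` (it fixes all letters outside `(m, m + |η|]`) and it keeps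
row standard the `η`-tableau with entries `m+1, …, m+|η|` entered in order along its
rows.  These permutations index the summands of `C(m ; η)`. -/
def KeepsRowStd (n m : ℕ) (eta : List ℕ) (w : Equiv.Perm (Fin n)) : Prop :=
  (∀ a : Fin n, ((a : ℕ) + 1 ≤ m ∨ m + eta.sum < (a : ℕ) + 1) → w a = a) ∧
  ∀ d j, j + 1 < eta.getD d 0 →
    permAct w (m + (eta.take d).sum + j + 1) < permAct w (m + (eta.take d).sum + j + 2)

/-- `(s, d, t) ∈ def(λ, 𝔡)`. -/
def dDef (r : ℕ) (lam : ℕ → List ℕ) (s d t : ℕ) : Prop :=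
  1 ≤ s ∧ s ≤ r ∧ 1 ≤ d ∧ d < (lam s).length ∧ 1 ≤ t ∧ t ≤ rowEntry lam s (d + 1)

/-- `s' ∈ def(λ, 𝔩)`. -/
def lDef (r : ℕ) (lam : ℕ → List ℕ) (s' : ℕ) : Prop :=
  1 ≤ s' ∧ s' ≤ r - 1 ∧ lam (s' + 1) ≠ []

/-- `S` (a function on nodes, valued in pairs `(i, k)` = (row, component)) is a
`ν`-tableau of type `λ`. -/
def IsTypeTab (r n : ℕ) (nu lam : ℕ → List ℕ) (S : ℕ × ℕ × ℕ → ℕ × ℕ) : Prop :=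
  ∀ i0 k0, 1 ≤ i0 → 1 ≤ k0 → k0 ≤ r →
    ((diagF r n nu).filter (fun x => S x = (i0, k0))).card = rowEntry lam k0 i0

/-- the order `⪯` on entries `(i,k)`. -/
def entryLE (p p' : ℕ × ℕ) : Prop := p.2 < p'.2 ∨ (p.2 = p'.2 ∧ p.1 ≤ p'.1)

/-- the strict order `≺` on entries `(i,k)`. -/
def entryLT (p p' : ℕ × ℕ) : Prop := p.2 < p'.2 ∨ (p.2 = p'.2 ∧ p.1 < p'.1)

/-- `S` is a semistandard `ν`-tableau of type `λ`, i.e. `S ∈ T₀(ν,λ)`. -/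
def IsSemistandard (r n : ℕ) (nu lam : ℕ → List ℕ) (S : ℕ × ℕ × ℕ → ℕ × ℕ) : Prop :=
  IsTypeTab r n nu lam S ∧
  (∀ x ∈ diagF r n nu, (x.1, x.2.1 + 1, x.2.2) ∈ diagF r n nu →
      entryLE (S x) (S (x.1, x.2.1 + 1, x.2.2))) ∧
  (∀ x ∈ diagF r n nu, (x.1 + 1, x.2.1, x.2.2) ∈ diagF r n nu →
      entryLT (S x) (S (x.1 + 1, x.2.1, x.2.2))) ∧
  (∀ x ∈ diagF r n nu, x.2.2 ≤ (S x).2)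

/-- `λ(t)` for the `ν`-tableau `t = t^ν · w`: the `ν`-tableau of type `λ` sending a
node `x` to the (row, component) of `t^λ` containing the entry `t(x)`. -/
def lamOf (r : ℕ) {n : ℕ} (lam nu : ℕ → List ℕ) (w : Equiv.Perm (Fin n))
    (x : ℕ × ℕ × ℕ) : ℕ × ℕ :=
  rowcompOf r lam (permAct w (tEntry nu x))

/-- `w` encodes the row-standard `λ`-tableau `t_S = t^λ · w` associated with a
`ν`-tableau `S` of type `λ`:  the tableau `t^λ · w` is row standard, and the entry
occupying node `x` in `t^ν` occupies a node in row/component `S x` of `t^λ · w`. -/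
def wSpec (r n : ℕ) (lam nu : ℕ → List ℕ) (S : ℕ × ℕ × ℕ → ℕ × ℕ)
    (w : Equiv.Perm (Fin n)) : Prop :=
  (∀ x ∈ diagF r n lam, (x.1, x.2.1 + 1, x.2.2) ∈ diagF r n lam →
      permAct w (tEntry lam x) < permAct w (tEntry lam (x.1, x.2.1 + 1, x.2.2))) ∧
  (∀ x ∈ diagF r n nu, rowcompOf r lam (permAct w⁻¹ (tEntry nu x)) = S x)

/-- The permutation `w` with `t_S = t^λ · w`. -/
def wS (r n : ℕ) (lam nu : ℕ → List ℕ) (S : ℕ × ℕ × ℕ → ℕ × ℕ) : Equiv.Perm (Fin n) :=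
  if h : ∃ w, wSpec r n lam nu S w then h.choose else 1

/-- `S^{(i,j)}_{(k,l)}`: the number of entries equal to `(i,j)` in row `k` of
component `l` of `S`. -/
def Scount (r n : ℕ) (nu : ℕ → List ℕ) (S : ℕ × ℕ × ℕ → ℕ × ℕ) (i j k l : ℕ) : ℕ :=
  ((diagF r n nu).filter (fun x => x.1 = k ∧ x.2.2 = l ∧ S x = (i, j))).card

/-- The composition `Γ_{(x,y)}` attached to `S`:
`(S^{(x,y)}_{(x,y)}, …, S^{(ρ_y(λ),y)}_{(x,y)}, S^{(1,y+1)}_{(x,y)}, …, S^{(ρ_r(λ),r)}_{(x,y)})`. -/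
def Gamma (r n : ℕ) (lam nu : ℕ → List ℕ) (S : ℕ × ℕ × ℕ → ℕ × ℕ) (x y : ℕ) : List ℕ :=
  ((List.range (r + 1 - y)).map (fun c' =>
    (List.range ((lam (y + c')).length + 1 - (if c' = 0 then x else 1))).map
      (fun i' => Scount r n nu S ((if c' = 0 then x else 1) + i') (y + c') x y))).flatten

/-- The permutation agreeing with `w` on the letters `{lo+1, …, hi}` and fixing all
other letters (when it exists). -/
def restrictPerm {n : ℕ} (w : Equiv.Perm (Fin n)) (lo hi : ℕ) : Equiv.Perm (Fin n) :=
  if h : ∃ u : Equiv.Perm (Fin n),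
      (∀ a : Fin n, (lo < (a : ℕ) + 1 ∧ (a : ℕ) + 1 ≤ hi) → u a = w a) ∧
      (∀ a : Fin n, ¬(lo < (a : ℕ) + 1 ∧ (a : ℕ) + 1 ≤ hi) → u a = a)
    then h.choose else 1

/-- The entries of the tableaux `t_{S(i)}`:  `t_{S(0)} = t_S`; and `t_{S(i+1)}` is
obtained from `t_{S(i)}` by making the entries of the first `i+1` components equal to
those of `t^λ` and relabelling the entries `x_1 < ⋯ < x_τ` of the remaining components
that are at most `ν̄_{(i+2)}` via `x_k ↦ λ̄_{(i+2)} + k`. -/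
def tabS (r n : ℕ) (lam nu : ℕ → List ℕ) (S : ℕ × ℕ × ℕ → ℕ × ℕ) :
    ℕ → (ℕ × ℕ × ℕ) → ℕ
  | 0 => fun x => permAct (wS r n lam nu S) (tEntry lam x)
  | (i + 1) => fun x =>
      if x.2.2 ≤ i + 1 then tEntry lam x
      else if tabS r n lam nu S i x ≤ bar nu (i + 2) 0 then
        bar lam (i + 2) 0 +
          ((diagF r n lam).filter (fun x' =>
            i + 1 < x'.2.2 ∧ tabS r n lam nu S i x' ≤ bar nu (i + 2) 0 ∧
              tabS r n lam nu S i x' ≤ tabS r n lam nu S i x)).card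
      else tabS r n lam nu S i x

/-- The permutation `w_{S(i)}` with `t_{S(i)} = t^λ · w_{S(i)}`. -/
def wSi (r n : ℕ) (lam nu : ℕ → List ℕ) (S : ℕ × ℕ × ℕ → ℕ × ℕ) (i : ℕ) :
    Equiv.Perm (Fin n) :=
  if h : ∃ w : Equiv.Perm (Fin n),
      ∀ x ∈ diagF r n lam, permAct w (tEntry lam x) = tabS r n lam nu S i x
    then h.choose else 1

/-- The permutation `w_i` with `t_{S(i-1)} = t_{S(i)} · w_i`. -/
def wStep (r n : ℕ) (lam nu : ℕ → List ℕ) (S : ℕ × ℕ × ℕ → ℕ × ℕ) (i : ℕ) :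
    Equiv.Perm (Fin n) :=
  if h : ∃ w : Equiv.Perm (Fin n),
      ∀ x ∈ diagF r n lam, tabS r n lam nu S (i - 1) x = permAct w (tabS r n lam nu S i x)
    then h.choose else 1

/-- The multicomposition `λ · 𝔡^{(s)}_{d,t}`. -/
def dShift (lam : ℕ → List ℕ) (s d t : ℕ) : ℕ → List ℕ := fun k =>
  if k = s then ((lam s).set (d - 1) (rowEntry lam s d + t)).set d (rowEntry lam s (d + 1) - t)
  else lam k

/-- The multicomposition `λ · 𝔩^{(s')}`. -/
def lShift (lam : ℕ → List ℕ) (s' : ℕ) : ℕ → List ℕ := fun k =>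
  if k = s' then lam s' ++ [1]
  else if k = s' + 1 then (lam (s' + 1)).set 0 (rowEntry lam (s' + 1) 1 - 1)
  else lam k

/-- The (1-indexed) entry `a` lies in component `s` of `t^λ`. -/
def InComp (lam : ℕ → List ℕ) (s a : ℕ) : Prop :=
  bar lam s 0 < a ∧ a ≤ bar lam s ((lam s).length)

/-- An algebra `H` equipped with the structure of the Ariki–Koike algebra
`H_{r,n}` with parameters `q` and `Q 1, …, Q r`: distinguished generators
`T 0, …, T (n-1)` satisfying the defining relations, together with the elements
`T_w` (determined by `T_w = T_{i_1} ⋯ T_{i_k}` for any reduced expression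
`w = s_{i_1} ⋯ s_{i_k}`). -/
structure AKPre (F : Type*) [Field F] (q : F) (r n : ℕ) (Q : ℕ → F)
    (H : Type*) [Ring H] [Algebra F H] where
  T : ℕ → H
  Tw : Equiv.Perm (Fin n) → H
  rel_T0 : ((List.range r).map (fun l => T 0 - algebraMap F H (Q (l + 1)))).prod = 0
  rel_T0T1 : 2 ≤ n → T 0 * T 1 * T 0 * T 1 = T 1 * T 0 * T 1 * T 0
  rel_quad : ∀ i, 1 ≤ i → i < n → (T i - algebraMap F H q) * (T i + 1) = 0
  rel_braid : ∀ i, 1 ≤ i → i + 1 < n → T i * T (i + 1) * T i = T (i + 1) * T i * T (i + 1)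
  rel_comm : ∀ i j, i + 1 < j → j < n → T i * T j = T j * T i
  Tw_one : Tw 1 = 1
  Tw_simple : ∀ i, 1 ≤ i → ∀ h2 : i < n,
    Tw (Equiv.swap ⟨i - 1, lt_of_le_of_lt (Nat.sub_le i 1) h2⟩ ⟨i, h2⟩) = T i
  Tw_mul : ∀ u v : Equiv.Perm (Fin n),
    permLen (u * v) = permLen u + permLen v → Tw (u * v) = Tw u * Tw v

namespace AKPre

variable {F : Type*} [Field F] {q : F} {r n : ℕ} {Q : ℕ → F}
  {H : Type*} [Ring H] [Algebra F H]

/-- The Jucys–Murphy type element `L_k = q^{1-k} T_{k-1} ⋯ T_1 T_0 T_1 ⋯ T_{k-1}`. -/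
def L (A : AKPre F q r n Q H) (k : ℕ) : H :=
  algebraMap F H (q ^ (1 - (k : ℤ))) *
    (((List.range (k - 1)).reverse.map (fun i => A.T (i + 1))).prod * A.T 0 *
      ((List.range (k - 1)).map (fun i => A.T (i + 1))).prod)

/-- `u⁺_λ = ∏_{s=2}^{r} ∏_{i=1}^{λ̄_{(s)}} (L_i − Q_s)`. -/
def uplus (A : AKPre F q r n Q H) (lam : ℕ → List ℕ) : H :=
  ((List.range (r - 1)).map (fun t =>
    ((List.range (bar lam (t + 2) 0)).map
      (fun i => A.L (i + 1) - algebraMap F H (Q (t + 2)))).prod)).prod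

/-- `x_λ`: the sum of the `T_w` over the `w ∈ S_n` stabilizing the rows of `t^λ`. -/
def x (A : AKPre F q r n Q H) (lam : ℕ → List ℕ) : H :=
  ∑ w ∈ Finset.univ.filter (fun w : Equiv.Perm (Fin n) => RowStab r n lam w), A.Tw w

/-- `m_λ = x_λ u⁺_λ`. -/
def m (A : AKPre F q r n Q H) (lam : ℕ → List ℕ) : H := A.x lam * A.uplus lam

/-- `m_{st} = T_{d(s)}^* m_λ T_{d(t)}`, where the standard tableaux `s, t` are encoded
by the permutations `u = d(s)`, `v = d(t)`. -/
def mst (A : AKPre F q r n Q H) (lam : ℕ → List ℕ) (u v : Equiv.Perm (Fin n)) : H :=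
  A.Tw u⁻¹ * A.m lam * A.Tw v

/-- The set `{m_{st} : s, t ∈ Std(μ), λ ◁ μ}` spanning `Ȟ^λ`. -/
def mstSet (A : AKPre F q r n Q H) (lam : ℕ → List ℕ) : Set H :=
  {z | ∃ mu u v, IsMulticomp r n mu ∧ IsMultipartition mu ∧ DomStrict lam mu ∧
        IsStd r n mu u ∧ IsStd r n mu v ∧ z = A.mst mu u v}

/-- The ideal `Ȟ^λ` (as a right ideal, i.e. a submodule for the right action of `H`,
encoded as a module over `Hᵐᵒᵖ`). -/
def Hcheck (A : AKPre F q r n Q H) (lam : ℕ → List ℕ) : Submodule Hᵐᵒᵖ H :=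
  Submodule.span Hᵐᵒᵖ (A.mstSet lam)

/-- The right ideal `M^λ = m_λ H`. -/
def Mmod (A : AKPre F q r n Q H) (lam : ℕ → List ℕ) : Submodule Hᵐᵒᵖ H :=
  Submodule.span Hᵐᵒᵖ {A.m lam}

/-- `C(m ; η)`. -/
def C (A : AKPre F q r n Q H) (mm : ℕ) (eta : List ℕ) : H :=
  ∑ w ∈ Finset.univ.filter (fun w : Equiv.Perm (Fin n) => KeepsRowStd n mm eta w), A.Tw w

/-- `𝔡^{(s)}_{d,t} = C(λ̄_{(d-1,s)} ; (λ^{(s)}_d, t))`. -/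
def dE (A : AKPre F q r n Q H) (lam : ℕ → List ℕ) (s d t : ℕ) : H :=
  A.C (bar lam s (d - 1)) [rowEntry lam s d, t]

/-- `𝔩^{(s')} = L_{λ̄_{(s'+1)}+1} − Q_{s'+1}`. -/
def lE (A : AKPre F q r n Q H) (lam : ℕ → List ℕ) (s' : ℕ) : H :=
  A.L (bar lam (s' + 1) 0 + 1) - algebraMap F H (Q (s' + 1))

/-- The generating set `{m_λ 𝔡^{(s)}_{d,t}} ∪ {m_λ 𝔩^{(s')}}` of the ideal `𝔍`. -/
def genSet (A : AKPre F q r n Q H) (lam : ℕ → List ℕ) : Set H :=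
  {z | (∃ s d t, dDef r lam s d t ∧ z = A.m lam * A.dE lam s d t) ∨
       (∃ s', lDef r lam s' ∧ z = A.m lam * A.lE lam s')}

/-- The right ideal `𝔍` generated by the `m_λ 𝔡^{(s)}_{d,t}` and the `m_λ 𝔩^{(s')}`. -/
def J (A : AKPre F q r n Q H) (lam : ℕ → List ℕ) : Submodule Hᵐᵒᵖ H :=
  Submodule.span Hᵐᵒᵖ (A.genSet lam)

/-- `m_{S t} = Σ_{s ∈ Std(ν), λ(s) = S} m_{s t}` for `S` a `ν`-tableau of type `λ`
(`t = t^ν · v`). -/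
def mS (A : AKPre F q r n Q H) (nu lam : ℕ → List ℕ) (S : ℕ × ℕ × ℕ → ℕ × ℕ)
    (v : Equiv.Perm (Fin n)) : H :=
  ∑ u ∈ Finset.univ.filter (fun u : Equiv.Perm (Fin n) =>
      IsStd r n nu u ∧ ∀ x ∈ diagF r n nu, lamOf r lam nu u x = S x),
    A.mst nu u v

/-- `T_S`. -/
def TS (A : AKPre F q r n Q H) (lam nu : ℕ → List ℕ) (S : ℕ × ℕ × ℕ → ℕ × ℕ) : H :=
  A.Tw (wS r n lam nu S)

/-- `∏_{y=1}^{r} ∏_{x=1}^{ρ_y(ν)} C(ν̄_{(x−1,y)} ; Γ_{(x,y)})`. -/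
def bigC (A : AKPre F q r n Q H) (lam nu : ℕ → List ℕ) (S : ℕ × ℕ × ℕ → ℕ × ℕ) : H :=
  ((List.range r).map (fun y' =>
    ((List.range ((nu (y' + 1)).length)).map (fun x' =>
      A.C (bar nu (y' + 1) x') (Gamma r n lam nu S (x' + 1) (y' + 1)))).prod)).prod

/-- `T_{S^{(s)}}`, where `w_s` is the cycle-factor of the permutation of `t_S`
supported on the letters of the `s`-th component. -/
def TScomp (A : AKPre F q r n Q H) (lam nu : ℕ → List ℕ) (S : ℕ × ℕ × ℕ → ℕ × ℕ)
    (s : ℕ) : H :=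
  A.Tw (restrictPerm (wS r n lam nu S) (bar lam s 0) (bar lam s ((lam s).length)))

/-- `T_{S(i)}`. -/
def TSi (A : AKPre F q r n Q H) (lam nu : ℕ → List ℕ) (S : ℕ × ℕ × ℕ → ℕ × ℕ)
    (i : ℕ) : H :=
  A.Tw (wSi r n lam nu S i)

/-- `D(t,s) = T_{t-1} T_{t-2} ⋯ T_s` (with `D(s,s) = 1`). -/
def D (A : AKPre F q r n Q H) (t s : ℕ) : H :=
  ((List.range (t - s)).reverse.map (fun j => A.T (s + j))).prod

/-- `ū⁺_{α^{(i)}} = ∏_{j=2}^{i+1} ∏_{k=1}^{ᾱ_{(j)}} (L_k − Q_j)`. -/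
def ubar (A : AKPre F q r n Q H) (al : ℕ → List ℕ) (i : ℕ) : H :=
  ((List.range i).map (fun t =>
    ((List.range (bar al (t + 2) 0)).map
      (fun k => A.L (k + 1) - algebraMap F H (Q (t + 2)))).prod)).prod

/-- `u̲⁺_{α^{(i)}} = ∏_{j=i+1}^{r} ∏_{k=1}^{ᾱ_{(j)}} (L_k − Q_j)`. -/
def ulow (A : AKPre F q r n Q H) (al : ℕ → List ℕ) (i : ℕ) : H :=
  ((List.range (r - i)).map (fun t =>
    ((List.range (bar al (i + 1 + t) 0)).map
      (fun k => A.L (k + 1) - algebraMap F H (Q (i + 1 + t)))).prod)).prod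

/-- `u⁺_{γ^{(i)} \ α^{(i)}} = ∏_{j=ᾱ_{(i+1)}+1}^{γ̄_{(i+1)}} (L_j − Q_{i+1})`. -/
def udiff (A : AKPre F q r n Q H) (ga al : ℕ → List ℕ) (i : ℕ) : H :=
  ((List.range (bar ga (i + 1) 0 - bar al (i + 1) 0)).map
    (fun t => A.L (bar al (i + 1) 0 + 1 + t) - algebraMap F H (Q (i + 1)))).prod

/-- The family `{m_{st}}`, over all multipartitions of `n` and all pairs of standard
tableaux, is an `F`-basis of `H` (this characterizes the Ariki–Koike algebra among
the algebras whose generators satisfy the defining relations). -/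
def IsCellular (A : AKPre F q r n Q H) : Prop :=
  Submodule.span F {z : H | ∃ lam u v, IsMulticomp r n lam ∧ IsMultipartition lam ∧
      IsStd r n lam u ∧ IsStd r n lam v ∧ z = A.mst lam u v} = ⊤ ∧
  LinearIndependent F
    (fun p : {p : (ℕ → List ℕ) × Equiv.Perm (Fin n) × Equiv.Perm (Fin n) //
        IsMulticomp r n p.1 ∧ IsMultipartition p.1 ∧ IsStd r n p.1 p.2.1 ∧
          IsStd r n p.1 p.2.2} =>
      A.mst p.1.1 p.1.2.1 p.1.2.2)

theorem mul_mem_Mmod (A : AKPre F q r n Q H) (lam : ℕ → List ℕ) (h : H) :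
    A.m lam * h ∈ A.Mmod lam := by
  have e : A.m lam * h = (MulOpposite.op h) • A.m lam := rfl
  rw [e]
  exact Submodule.smul_mem _ _ (Submodule.mem_span_singleton_self _)

end AKPre

/-- The Ariki–Koike algebra `H_{r,n}`: an algebra with generators satisfying the
defining relations, for which the elements `m_{st}` form an `F`-basis. -/
structure AKAlg (F : Type*) [Field F] (q : F) (r n : ℕ) (Q : ℕ → F)
    (H : Type*) [Ring H] [Algebra F H] extends AKPre F q r n Q H where
  cellular : toAKPre.IsCellular

end AK

/-!
A permutation stabilizing the components of `t^ν` maps every initial segment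
`{1, …, ν̄_{(s)}}` onto itself, so none of its descents sits at a cut point `ν̄_{(s)}`;
peeling descents off one at a time writes `T_w` as a product of generators `T_i` with `i`
never a cut point. Each factor `∏_{k=1}^{m} (L_k - Q_s)` of `u⁺_ν` has `m = ν̄_{(s)}`, and `T_i`
commutes with it for `i ≠ m`: `T_i` commutes with `L_k` for `k ∉ {i, i+1}`, and, by the
quadratic and braid relations and `L_{i+1} = q⁻¹ T_i L_i T_i`, with the symmetric expressions
`L_i + L_{i+1}` and `L_i L_{i+1}`, hence with `(L_i - Q_s)(L_{i+1} - Q_s)`.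
-/

theorem Commute.conj_of_braid {M : Type*} [Monoid M] {t u l : M} (hbr : t * u * t = u * t * u)
    (hul : Commute u l) : Commute t (u * (t * l * t) * u) :=
  calc t * (u * (t * l * t) * u) = t * u * t * l * t * u := by simp only [mul_assoc]
    _ = u * t * (u * l) * t * u := by rw [hbr]; simp only [mul_assoc]
    _ = u * t * l * (u * t * u) := by rw [hul.eq]; simp only [mul_assoc]
    _ = u * (t * l * t) * u * t := by rw [← hbr]; simp only [mul_assoc]

namespace AK

section Permutations

variable {n : ℕ}

lemma permLen_one : permLen (1 : Equiv.Perm (Fin n)) = 0 := by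
  rw [permLen, Finset.card_eq_zero, Finset.filter_eq_empty_iff]
  exact fun p _ h => lt_asymm h.1 h.2

lemma swap_succ_lt_swap_succ {a : ℕ} (ha : a + 1 < n) {x y : Fin n} (hxy : x < y)
    (hne : (x, y) ≠ (⟨a, by omega⟩, ⟨a + 1, ha⟩)) :
    Equiv.swap ⟨a, by omega⟩ ⟨a + 1, ha⟩ x < Equiv.swap (⟨a, by omega⟩ : Fin n) ⟨a + 1, ha⟩ y := by
  rw [Fin.lt_def] at hxy ⊢
  simp only [ne_eq, Prod.mk.injEq, Fin.ext_iff] at hne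
  simp only [Equiv.swap_apply_def, Fin.ext_iff]
  split_ifs <;> simp_all <;> omega

/-- At a descent `(a, a+1)` of `w`, conjugating pairs by the transposition `s = (a, a+1)`
matches the inversions of `w * s` with those of `w` other than `(a, a+1)`. -/
lemma permLen_mul_swap_add_one (w : Equiv.Perm (Fin n)) {a : ℕ} (ha : a + 1 < n)
    (hd : w ⟨a + 1, ha⟩ < w ⟨a, by omega⟩) :
    permLen (w * Equiv.swap ⟨a, by omega⟩ ⟨a + 1, ha⟩) + 1 = permLen w := by
  set s := Equiv.swap (⟨a, by omega⟩ : Fin n) ⟨a + 1, ha⟩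
  set p : Fin n × Fin n := (⟨a, by omega⟩, ⟨a + 1, ha⟩)
  have hp : p ∈ Finset.univ.filter (fun p : Fin n × Fin n => p.1 < p.2 ∧ w p.2 < w p.1) := by
    simp only [p, Finset.mem_filter, Finset.mem_univ, true_and]
    exact ⟨Fin.mk_lt_mk.2 (by omega), hd⟩
  have hinv : Finset.univ.filter (fun p : Fin n × Fin n => p.1 < p.2 ∧ (w * s) p.2 < (w * s) p.1)
      = ((Finset.univ.filter (fun p : Fin n × Fin n => p.1 < p.2 ∧ w p.2 < w p.1)).erase p).map
      (Equiv.prodCongr s s).toEmbedding := by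
    ext ⟨x, y⟩
    rw [Finset.mem_map_equiv]
    simp only [Finset.mem_erase, Finset.mem_filter, Finset.mem_univ, true_and]
    simp only [Equiv.prodCongr_symm, Equiv.symm_swap, Equiv.prodCongr_apply, Prod.map_apply,
      Equiv.Perm.mul_apply, s]
    constructor
    · rintro ⟨hxy, hw⟩
      have hne : (x, y) ≠ p := by
        intro h
        simp only [p, Prod.mk.injEq] at h
        obtain ⟨rfl, rfl⟩ := h
        simp only [Equiv.swap_apply_left, Equiv.swap_apply_right] at hw
        exact lt_asymm hw hd
      refine ⟨?_, swap_succ_lt_swap_succ ha hxy hne, hw⟩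
      intro h
      simp only [p, Prod.mk.injEq, Equiv.swap_apply_eq_iff, Equiv.swap_apply_left,
        Equiv.swap_apply_right] at h
      obtain ⟨rfl, rfl⟩ := h
      exact absurd hxy (by simp [Fin.lt_def])
    · rintro ⟨hne, hxy, hw⟩
      refine ⟨?_, hw⟩
      simpa using swap_succ_lt_swap_succ ha hxy hne
  rw [permLen, hinv, Finset.card_map, Finset.card_erase_add_one hp, permLen]

lemma permLen_swap_succ {a : ℕ} (ha : a + 1 < n) :
    permLen (Equiv.swap (⟨a, by omega⟩ : Fin n) ⟨a + 1, ha⟩) = 1 := by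
  have h := permLen_mul_swap_add_one (Equiv.swap (⟨a, by omega⟩ : Fin n) ⟨a + 1, ha⟩) ha
    (by simp [Fin.lt_def])
  rwa [Equiv.swap_mul_self, permLen_one, zero_add, eq_comm] at h

lemma swap_succ_lt_iff {a b : ℕ} (ha : a + 1 < n) (hb : b ≠ a + 1) (c : Fin n) :
    (Equiv.swap (⟨a, by omega⟩ : Fin n) ⟨a + 1, ha⟩ c : ℕ) < b ↔ (c : ℕ) < b := by
  rw [Equiv.swap_apply_def]
  split_ifs <;> simp_all [Fin.ext_iff] <;> omega

lemma permAct_val_add_one (w : Equiv.Perm (Fin n)) (a : Fin n) :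
    permAct w (a + 1) = w a + 1 := by
  simp [permAct]

lemma exists_descent_of_ne_one {w : Equiv.Perm (Fin n)} (hw : w ≠ 1) :
    ∃ a, ∃ ha : a + 1 < n, w ⟨a + 1, ha⟩ < w ⟨a, by omega⟩ := by
  contrapose! hw
  obtain _ | m := n
  · exact Subsingleton.elim _ _
  have hmono : Monotone w := Fin.monotone_iff_le_succ.2 fun i => hw i i.succ.isLt
  ext x
  exact congrArg Fin.val
    (DFunLike.congr_fun (OrderHom.eq_id_of_injective ⟨w, hmono⟩ w.injective) x)

end Permutations

section Components

variable (nu : ℕ → List ℕ)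

lemma bar_zero (s : ℕ) : bar nu s 0 = ∑ j ∈ Finset.range (s - 1), (nu (j + 1)).sum := by
  simp [bar]

lemma bar_zero_mono {s s' : ℕ} (h : s ≤ s') : bar nu s 0 ≤ bar nu s' 0 := by
  rw [bar_zero, bar_zero]
  exact Finset.sum_le_sum_of_subset (Finset.range_subset_range.2 (by omega))

lemma bar_zero_succ {s : ℕ} (hs : 1 ≤ s) : bar nu (s + 1) 0 = bar nu s 0 + (nu s).sum := by
  rw [bar_zero, bar_zero, show s + 1 - 1 = s - 1 + 1 by omega, Finset.sum_range_succ,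
    Nat.sub_add_cancel hs]

lemma inComp_iff {s a : ℕ} (hs : 1 ≤ s) :
    InComp nu s a ↔ bar nu s 0 < a ∧ a ≤ bar nu (s + 1) 0 := by
  rw [InComp, bar_zero_succ nu hs]
  simp [bar]

lemma exists_inComp {s s' a : ℕ} (hs : 1 ≤ s) (h₁ : bar nu s 0 < a) (h₂ : a ≤ bar nu s' 0) :
    ∃ i, s ≤ i ∧ i < s' ∧ InComp nu i a := by
  induction s' with
  | zero => exact absurd (bar_zero_mono nu (Nat.zero_le s)) (by omega)
  | succ t ih =>
    by_cases ha : a ≤ bar nu t 0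
    · obtain ⟨i, hsi, hit, hi⟩ := ih ha
      exact ⟨i, hsi, by omega, hi⟩
    · have hst : s ≤ t := by
        by_contra! h
        have := bar_zero_mono nu (show t + 1 ≤ s from h)
        omega
      exact ⟨t, hst, by omega, (inComp_iff nu (by omega)).2 ⟨by omega, h₂⟩⟩

variable {nu}

lemma bar_zero_eq_of_isMulticomp {r n : ℕ} (hnu : IsMulticomp r n nu) :
    bar nu (r + 1) 0 = n := by
  rw [bar_zero, ← hnu.1, Nat.add_sub_cancel, Finset.range_eq_Ico,
    Finset.sum_Ico_add' (fun s => (nu s).sum), Finset.Ico_add_one_right_eq_Icc]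

lemma lt_bar_zero_iff_of_stabilizes {r n : ℕ} (hnu : IsMulticomp r n nu) {w : Equiv.Perm (Fin n)}
    (hw : ∀ (a : Fin n) i, 1 ≤ i → i ≤ r → InComp nu i (a + 1) → InComp nu i (w a + 1))
    {s : ℕ} (hs : 1 ≤ s) (hsr : s ≤ r + 1) (a : Fin n) :
    (w a : ℕ) < bar nu s 0 ↔ (a : ℕ) < bar nu s 0 := by
  have hn := bar_zero_eq_of_isMulticomp hnu
  constructor
  · intro hwa
    by_contra! has
    obtain ⟨i, hsi, hir, hi⟩ :=
      exists_inComp nu hs (by omega) (show a + 1 ≤ bar nu (r + 1) 0 by omega)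
    have := ((inComp_iff nu (by omega)).1 (hw a i (by omega) (by omega) hi)).1
    have := bar_zero_mono nu hsi
    omega
  · intro has
    obtain ⟨i, h1i, his, hi⟩ :=
      exists_inComp nu le_rfl (by simp [bar]) (show a + 1 ≤ bar nu s 0 by omega)
    have := ((inComp_iff nu h1i).1 (hw a i h1i (by omega) hi)).2
    have := bar_zero_mono nu (show i + 1 ≤ s by omega)
    omega

end Components

namespace AKPre

variable {F : Type*} [Field F] {q : F} {r n : ℕ} {Q : ℕ → F} {H : Type*} [Ring H] [Algebra F H]
  (A : AKPre F q r n Q H)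

lemma L_one : A.L 1 = A.T 0 := by
  simp [L]

lemma L_succ (hq0 : q ≠ 0) {k : ℕ} (hk : 1 ≤ k) :
    A.L (k + 1) = q⁻¹ • (A.T k * A.L k * A.T k) := by
  obtain ⟨k, rfl⟩ : ∃ k', k = k' + 1 := ⟨k - 1, by omega⟩
  simp only [L, ← Algebra.smul_def, Nat.add_sub_cancel, List.range_succ, List.map_append,
    List.reverse_append, List.prod_append, List.map_cons, List.map_nil, List.reverse_cons,
    List.reverse_nil, List.nil_append, List.prod_cons, List.prod_nil, mul_one, mul_smul_comm,
    smul_mul_assoc, smul_smul]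
  congr 1
  · rw [← zpow_neg_one, ← zpow_add₀ hq0]
    push_cast
    ring_nf
  · simp only [mul_assoc]

lemma T_mul_T (i : ℕ) (h1 : 1 ≤ i) (h2 : i < n) :
    A.T i * A.T i = (q - 1) • A.T i + algebraMap F H q := by
  rw [← sub_eq_zero, ← A.rel_quad i h1 h2, sub_smul, one_smul, Algebra.smul_def]
  noncomm_ring

lemma commute_T_L_of_lt (hq0 : q ≠ 0) {j k : ℕ} (hk : 1 ≤ k) (hkj : k < j) (hj : j < n) :
    Commute (A.T j) (A.L k) := by
  induction k, hk using Nat.le_induction with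
  | base => rw [L_one]; exact (A.rel_comm 0 j (by omega) hj).symm
  | succ k hk ih =>
    rw [A.L_succ hq0 hk]
    have hjk : Commute (A.T j) (A.T k) := (A.rel_comm k j (by omega) hj).symm
    exact ((hjk.mul_right (ih (by omega))).mul_right hjk).smul_right _

/-- That is, `L_i` and `L_{i+1} = q⁻¹ T_i L_i T_i` commute. -/
lemma commute_L_T_mul_L_mul_T (hq0 : q ≠ 0) {i : ℕ} (hi : 1 ≤ i) (hin : i < n) :
    Commute (A.L i) (A.T i * A.L i * A.T i) := by
  induction i, hi using Nat.le_induction with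
  | base =>
    rw [L_one]
    have h := A.rel_T0T1 (by omega)
    simp only [Commute, SemiconjBy, ← mul_assoc]
    exact h
  | succ m hm ih =>
    rw [A.L_succ hq0 hm, mul_smul_comm, smul_mul_assoc]
    refine (Commute.smul_right ?_ _).smul_left _
    have hbr := A.rel_braid m hm hin
    have hul : Commute (A.T (m + 1)) (A.L m) := A.commute_T_L_of_lt hq0 hm (by omega) hin
    have ht := Commute.conj_of_braid hbr hul
    have hl := (hul.symm.mul_right (ih (by omega))).mul_right hul.symm
    exact (ht.mul_left hl).mul_left ht

lemma commute_T_L_of_add_two_le (hq0 : q ≠ 0) {j k : ℕ} (hj : 1 ≤ j) (hjk : j + 2 ≤ k)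
    (hk : k ≤ n) : Commute (A.T j) (A.L k) := by
  induction k, hjk using Nat.le_induction with
  | base =>
    rw [A.L_succ hq0 (by omega), A.L_succ hq0 hj, mul_smul_comm, smul_mul_assoc]
    have hul := A.commute_T_L_of_lt hq0 hj (Nat.lt_succ_self j) (by omega)
    exact ((Commute.conj_of_braid (A.rel_braid j hj (by omega)) hul).smul_right _).smul_right _
  | succ k hk ih =>
    rw [A.L_succ hq0 (by omega)]
    have hjk : Commute (A.T j) (A.T k) := A.rel_comm j k (by omega) (by omega)
    exact ((hjk.mul_right (ih (by omega))).mul_right hjk).smul_right _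

lemma T_mul_L_succ (hq0 : q ≠ 0) {i : ℕ} (h1 : 1 ≤ i) (h2 : i < n) :
    A.T i * A.L (i + 1) = (q - 1) • A.L (i + 1) + A.L i * A.T i := by
  have h : A.T i * (A.T i * A.L i * A.T i)
      = (q - 1) • (A.T i * A.L i * A.T i) + q • (A.L i * A.T i) := by
    rw [← mul_assoc, ← mul_assoc, A.T_mul_T i h1 h2, add_mul, add_mul, ← Algebra.smul_def]
    simp only [smul_mul_assoc, mul_assoc]
  rw [A.L_succ hq0 h1, mul_smul_comm, h, smul_add, smul_comm q⁻¹ (q - 1), inv_smul_smul₀ hq0]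

lemma L_succ_mul_T (hq0 : q ≠ 0) {i : ℕ} (h1 : 1 ≤ i) (h2 : i < n) :
    A.L (i + 1) * A.T i = (q - 1) • A.L (i + 1) + A.T i * A.L i := by
  have h : (A.T i * A.L i * A.T i) * A.T i
      = (q - 1) • (A.T i * A.L i * A.T i) + q • (A.T i * A.L i) := by
    rw [mul_assoc, A.T_mul_T i h1 h2, mul_add, mul_smul_comm, ← Algebra.commutes,
      ← Algebra.smul_def]
  rw [A.L_succ hq0 h1, smul_mul_assoc, h, smul_add, smul_comm q⁻¹ (q - 1), inv_smul_smul₀ hq0]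

lemma commute_T_L_add_L_succ (hq0 : q ≠ 0) {i : ℕ} (h1 : 1 ≤ i) (h2 : i < n) :
    Commute (A.T i) (A.L i + A.L (i + 1)) := by
  simp only [Commute, SemiconjBy, mul_add, add_mul, A.T_mul_L_succ hq0 h1 h2,
    A.L_succ_mul_T hq0 h1 h2]
  abel

lemma commute_T_L_mul_L_succ (hq0 : q ≠ 0) {i : ℕ} (h1 : 1 ≤ i) (h2 : i < n) :
    Commute (A.T i) (A.L i * A.L (i + 1)) := by
  rw [A.L_succ hq0 h1, mul_smul_comm]
  refine Commute.smul_right ?_ _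
  calc A.T i * (A.L i * (A.T i * A.L i * A.T i))
      = A.T i * A.L i * A.T i * A.L i * A.T i := by simp only [mul_assoc]
    _ = A.L i * (A.T i * A.L i * A.T i) * A.T i := by
      rw [(A.commute_L_T_mul_L_mul_T hq0 h1 h2).eq]

lemma commute_T_L_sub_mul_L_succ_sub (hq0 : q ≠ 0) {i : ℕ} (h1 : 1 ≤ i) (h2 : i < n) (c : F) :
    Commute (A.T i) ((A.L i - algebraMap F H c) * (A.L (i + 1) - algebraMap F H c)) := by
  have h : (A.L i - algebraMap F H c) * (A.L (i + 1) - algebraMap F H c)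
      = A.L i * A.L (i + 1) - algebraMap F H c * (A.L i + A.L (i + 1))
        + algebraMap F H c * algebraMap F H c := by
    rw [mul_add, ← (Algebra.commute_algebraMap_right c (A.L i)).eq]
    noncomm_ring
  rw [h]
  have hc := Algebra.commute_algebraMap_right c (A.T i)
  exact ((A.commute_T_L_mul_L_succ hq0 h1 h2).sub_right
    (hc.mul_right (A.commute_T_L_add_L_succ hq0 h1 h2))).add_right (hc.mul_right hc)

lemma commute_T_prod_L_sub (hq0 : q ≠ 0) {i m : ℕ} (h1 : 1 ≤ i) (h2 : i < n) (hmn : m ≤ n)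
    (hmi : m ≠ i) (c : F) :
    Commute (A.T i) (((List.range m).map (fun k => A.L (k + 1) - algebraMap F H c)).prod) := by
  have hc := Algebra.commute_algebraMap_right c (A.T i)
  have hlow : ∀ m < i,
      Commute (A.T i) (((List.range m).map (fun k => A.L (k + 1) - algebraMap F H c)).prod) := by
    refine fun m hm => Commute.list_prod_right _ _ ?_
    simp only [List.mem_map, List.mem_range]
    rintro _ ⟨k, hk, rfl⟩
    exact (A.commute_T_L_of_lt hq0 (by omega) (by omega) h2).sub_right hc
  rcases Nat.lt_or_gt_of_ne hmi with hlt | hgt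
  · exact hlow m hlt
  induction m, hgt using Nat.le_induction with
  | base =>
    obtain ⟨j, rfl⟩ : ∃ j, i = j + 1 := ⟨i - 1, by omega⟩
    rw [List.prod_range_succ, List.prod_range_succ, mul_assoc]
    exact (hlow j (by omega)).mul_right (A.commute_T_L_sub_mul_L_succ_sub hq0 h1 h2 c)
  | succ m hm ih =>
    rw [List.prod_range_succ]
    exact (ih (by omega) (by omega)).mul_right
      ((A.commute_T_L_of_add_two_le hq0 h1 (by omega) hmn).sub_right hc)

lemma commute_T_uplus (hq0 : q ≠ 0) {nu : ℕ → List ℕ} (hnu : IsMulticomp r n nu) {i : ℕ}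
    (h1 : 1 ≤ i) (h2 : i < n) (hi : ∀ s ∈ Set.Icc 2 r, bar nu s 0 ≠ i) :
    Commute (A.T i) (A.uplus nu) := by
  refine Commute.list_prod_right _ _ ?_
  simp only [List.mem_map, List.mem_range]
  rintro _ ⟨t, ht, rfl⟩
  have hle : bar nu (t + 2) 0 ≤ n :=
    bar_zero_eq_of_isMulticomp hnu ▸ bar_zero_mono nu (by omega)
  exact A.commute_T_prod_L_sub hq0 h1 h2 hle (hi (t + 2) ⟨by omega, by omega⟩) _

/-- Induction on `permLen w`: a descent `(a, a+1)` of `w` cannot straddle a cut `b ∈ B`, so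
`T_w = T_{w s} T_{a+1}` with `s = (a, a+1)` and `a + 1 ∉ B`. -/
lemma commute_Tw_of_commute_T {x : H} (B : Set ℕ)
    (hT : ∀ i, 1 ≤ i → i < n → i ∉ B → Commute (A.T i) x) (w : Equiv.Perm (Fin n))
    (hw : ∀ b ∈ B, ∀ a : Fin n, (w a : ℕ) < b ↔ (a : ℕ) < b) : Commute (A.Tw w) x := by
  induction hN : permLen w using Nat.strong_induction_on generalizing w with
  | _ N ih =>
  by_cases hw1 : w = 1
  · rw [hw1, A.Tw_one]
    exact Commute.one_left x
  obtain ⟨a, ha, hd⟩ := exists_descent_of_ne_one hw1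
  set s := Equiv.swap (⟨a, by omega⟩ : Fin n) ⟨a + 1, ha⟩
  have haB : a + 1 ∉ B := by
    intro hB
    have h1 := (hw _ hB ⟨a, by omega⟩).2 (by simp)
    have h2 := (hw _ hB ⟨a + 1, ha⟩).1
    rw [Fin.lt_def] at hd
    simp only [lt_self_iff_false, imp_false, not_lt] at h2
    omega
  have hws : ∀ b ∈ B, ∀ c : Fin n, ((w * s) c : ℕ) < b ↔ (c : ℕ) < b := fun b hb c => by
    rw [Equiv.Perm.mul_apply, hw b hb, swap_succ_lt_iff ha (fun h => haB (h ▸ hb))]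
  have hlen : permLen (w * s) + 1 = permLen w := permLen_mul_swap_add_one w ha hd
  have hTs : A.Tw s = A.T (a + 1) := A.Tw_simple (a + 1) (by omega) ha
  have hTw : A.Tw w = A.Tw (w * s) * A.T (a + 1) := by
    rw [← hTs, ← A.Tw_mul _ _ (by rw [Equiv.mul_swap_mul_self, permLen_swap_succ]; omega),
      Equiv.mul_swap_mul_self]
  rw [hTw]
  exact (ih _ (by omega) (w * s) hws rfl).mul_left (hT (a + 1) (by omega) ha haB)

end AKPre

end AK

theorem statement9_general {F : Type*} [Field F] {q : F} {r n : ℕ} {Q : ℕ → F}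
    {H : Type*} [Ring H] [Algebra F H]
    (hq0 : q ≠ 0)
    (A : AK.AKAlg F q r n Q H)
    (nu : ℕ → List ℕ) (hnu : AK.IsMulticomp r n nu) (w : Equiv.Perm (Fin n))
    (hw : ∀ a : Fin n, ∀ i, 1 ≤ i → i ≤ r → AK.InComp nu i ((a : ℕ) + 1) →
        AK.InComp nu i (AK.permAct w ((a : ℕ) + 1))) :
    A.toAKPre.Tw w * A.toAKPre.uplus nu = A.toAKPre.uplus nu * A.toAKPre.Tw w := by
  have hstab : ∀ (a : Fin n) i, 1 ≤ i → i ≤ r → AK.InComp nu i (a + 1) →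
      AK.InComp nu i (w a + 1) := fun a i h1 h2 ha => by
    simpa [AK.permAct_val_add_one] using hw a i h1 h2 ha
  refine (A.commute_Tw_of_commute_T ((fun s => AK.bar nu s 0) '' Set.Icc 2 r) ?_ w ?_).eq
  · exact fun i h1 h2 hiB => A.commute_T_uplus hq0 hnu h1 h2 fun s hs he => hiB ⟨s, hs, he⟩
  · rintro _ ⟨s, ⟨hs2, hsr⟩, rfl⟩ a
    exact AK.lt_bar_zero_iff_of_stabilizes hnu hstab (by omega) (by omega) a

/-- if `w ∈ S_n` stabilizes the components of `t^ν` then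
`T_w u⁺_ν = u⁺_ν T_w`. -/
theorem statement9 {F : Type*} [Field F] {q : F} {r n : ℕ} {Q : ℕ → F}
    {H : Type*} [Ring H] [Algebra F H]
    (hq0 : q ≠ 0) (hq1 : q ≠ 1) (hr : 1 ≤ r) (hn : 1 ≤ n)
    (A : AK.AKAlg F q r n Q H)
    (nu : ℕ → List ℕ) (hnu : AK.IsMulticomp r n nu) (w : Equiv.Perm (Fin n))
    (hw : ∀ a : Fin n, ∀ i, 1 ≤ i → i ≤ r → AK.InComp nu i ((a : ℕ) + 1) →
        AK.InComp nu i (AK.permAct w ((a : ℕ) + 1))) :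
    A.toAKPre.Tw w * A.toAKPre.uplus nu = A.toAKPre.uplus nu * A.toAKPre.Tw w :=
  statement9_general hq0 A nu hnu w hw
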